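/- arXiv:1907.09053 — 3 statements merged into one kernel-verified Lean document; each statement's English description precedes it below -/
import Mathlib

section
/- Suppose for each precinct i there exists a subset A_i* ⊆ S_i with |A_i*| = D_i, and there exists β̃ ∈ ℝ^p such that β̃·x_{ij} > 0 for all j ∈ A_i* (all i) and β̃·x_{ij} < 0 for all j ∈ S_i \ A_i* (all i). Then the log-likelihood ℓ(t β̃) → 0 as t → ∞; since ℓ(β) < 0 for all β, the supremum of ℓ is 0 and is not attained, hence no finite MLE exists. -/
open Finset Filter

noncomputable def ell {J : Type*} [DecidableEq J] {p n : ℕ}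
    (S : Fin n → Finset J) (D : Fin n → ℕ) (x : Fin n → J → Fin p → ℝ)
    (β : Fin p → ℝ) : ℝ :=
  ∑ i, (Real.log (∑ A ∈ (S i).powersetCard (D i),
      Real.exp (∑ j ∈ A, ∑ a, x i j a * β a))
    - ∑ j ∈ S i, Real.log (1 + Real.exp (∑ a, x i j a * β a)))

/-!
Each precinct term of `ell` is the log of the Poisson-binomial probability of `D i` successes
among independent trials with success probabilities `sigmoid (x i j · β)`. Along `t • βt` these
probabilities tend to `1` on `Astar i` and to `0` on the rest of `S i`, so the outcome `Astar i`
gets probability tending to `1`, every other outcome probability tending to `0`, and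
`ell (t • βt) → 0`. As `ell < 0` everywhere, `0` is its supremum and is never attained.
-/

open Real Topology

namespace Real

lemma sigmoid_eq_exp_div (x : ℝ) : sigmoid x = exp x / (1 + exp x) := by
  rw [sigmoid_def, exp_neg]
  field_simp
  ring

lemma one_sub_sigmoid_eq_inv (x : ℝ) : 1 - sigmoid x = (1 + exp x)⁻¹ := by
  rw [← sigmoid_neg, sigmoid_def, neg_neg]

lemma tendsto_sigmoid_mul_atTop_of_pos {r : ℝ} (hr : 0 < r) :
    Tendsto (fun t => sigmoid (t * r)) atTop (𝓝 1) :=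
  tendsto_sigmoid_atTop.comp (tendsto_id.atTop_mul_const hr)

lemma tendsto_sigmoid_mul_atTop_of_neg {r : ℝ} (hr : r < 0) :
    Tendsto (fun t => sigmoid (t * r)) atTop (𝓝 0) :=
  tendsto_sigmoid_atBot.comp (tendsto_id.atTop_mul_const_of_neg hr)

end Real

lemma ciSup_eq_of_forall_le_of_tendsto {ι α : Type*} {f : ι → ℝ} {c : ℝ} {l : Filter α}
    [l.NeBot] {g : α → ι} (hle : ∀ i, f i ≤ c)
    (hlim : Tendsto (fun t => f (g t)) l (𝓝 c)) :
    ⨆ i, f i = c :=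
  have : Nonempty ι := (nonempty_of_neBot l).map g
  (ciSup_le hle).antisymm <| le_of_tendsto hlim <|
    Eventually.of_forall fun t => le_ciSup ⟨c, Set.forall_mem_range.2 hle⟩ (g t)

section PoissonBinomial

variable {J : Type*} [DecidableEq J]

noncomputable def poissonBinomialProb (S : Finset J) (D : ℕ) (q : J → ℝ) : ℝ :=
  ∑ A ∈ S.powersetCard D, ∏ j ∈ S, if j ∈ A then q j else 1 - q j

lemma poissonBinomialProb_sigmoid (S : Finset J) (D : ℕ) (η : J → ℝ) :
    poissonBinomialProb S D (fun j => sigmoid (η j)) =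
      (∑ A ∈ S.powersetCard D, exp (∑ j ∈ A, η j)) / ∏ j ∈ S, (1 + exp (η j)) := by
  rw [poissonBinomialProb, sum_div]
  refine sum_congr rfl fun A hA => ?_
  have hAS : S ∩ A = A := inter_eq_right.2 (mem_powersetCard.1 hA).1
  calc ∏ j ∈ S, (if j ∈ A then sigmoid (η j) else 1 - sigmoid (η j))
      = ∏ j ∈ S, (if j ∈ A then exp (η j) else 1) * (1 + exp (η j))⁻¹ := by
        refine prod_congr rfl fun j _ => ?_
        split_ifs
        · rw [sigmoid_eq_exp_div, div_eq_mul_inv]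
        · rw [one_sub_sigmoid_eq_inv, one_mul]
    _ = exp (∑ j ∈ A, η j) / ∏ j ∈ S, (1 + exp (η j)) := by
        rw [prod_mul_distrib, prod_ite_mem, hAS, prod_inv_distrib, exp_sum, div_eq_mul_inv]

lemma tendsto_poissonBinomialProb {α : Type*} {l : Filter α} {S A : Finset J} {D : ℕ}
    {q : α → J → ℝ} (hA : A ∈ S.powersetCard D)
    (h1 : ∀ j ∈ A, Tendsto (fun t => q t j) l (𝓝 1))
    (h0 : ∀ j ∈ S \ A, Tendsto (fun t => q t j) l (𝓝 0)) :
    Tendsto (fun t => poissonBinomialProb S D (q t)) l (𝓝 1) := by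
  set e : J → ℝ := fun j => if j ∈ A then 1 else 0
  have hq : ∀ j ∈ S, Tendsto (fun t => q t j) l (𝓝 (e j)) := fun j hj => by
    by_cases hjA : j ∈ A
    · simpa [e, hjA] using h1 j hjA
    · simpa [e, hjA] using h0 j (mem_sdiff.2 ⟨hj, hjA⟩)
  have hlim : Tendsto (fun t => poissonBinomialProb S D (q t)) l
      (𝓝 (poissonBinomialProb S D e)) :=
    tendsto_finsetSum _ fun B _ => tendsto_finsetProd _ fun j hj => by
      split_ifs
      exacts [hq j hj, tendsto_const_nhds.sub (hq j hj)]
  have hval : poissonBinomialProb S D e = 1 := by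
    rw [poissonBinomialProb, sum_eq_single_of_mem A hA]
    · exact prod_eq_one fun j _ => by by_cases hjA : j ∈ A <;> simp [e, hjA]
    · intro B hB hBA
      obtain ⟨j, hjS, hj⟩ : ∃ j ∈ S, ¬(j ∈ B ↔ j ∈ A) := by
        by_contra! h
        exact hBA (ext fun j => by
          by_cases hjS : j ∈ S
          · exact h j hjS
          · exact iff_of_false (fun hjB => hjS ((mem_powersetCard.1 hB).1 hjB))
              fun hjA => hjS ((mem_powersetCard.1 hA).1 hjA))
      exact prod_eq_zero hjS (by by_cases hjA : j ∈ A <;> simp_all [e])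
  rwa [hval] at hlim

lemma ell_eq_sum_log_poissonBinomialProb {p n : ℕ} (S : Fin n → Finset J) (D : Fin n → ℕ)
    (x : Fin n → J → Fin p → ℝ) (hD : ∀ i, D i ≤ (S i).card) (β : Fin p → ℝ) :
    ell S D x β =
      ∑ i, log (poissonBinomialProb (S i) (D i) fun j => sigmoid (∑ a, x i j a * β a)) := by
  refine sum_congr rfl fun i _ => ?_
  have hpos : 0 < ∑ A ∈ (S i).powersetCard (D i), exp (∑ j ∈ A, ∑ a, x i j a * β a) :=
    sum_pos (fun _ _ => exp_pos _) (powersetCard_nonempty.2 (hD i))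
  rw [poissonBinomialProb_sigmoid, log_div hpos.ne' (prod_pos fun _ _ => by positivity).ne',
    log_prod fun _ _ => by positivity]

end PoissonBinomial

theorem no_finite_MLE_under_separation {J : Type*} [DecidableEq J] {p n : ℕ}
    (S : Fin n → Finset J) (D : Fin n → ℕ) (x : Fin n → J → Fin p → ℝ)
    (Astar : Fin n → Finset J) (hsub : ∀ i, Astar i ⊆ S i)
    (hcard : ∀ i, (Astar i).card = D i)
    (βt : Fin p → ℝ)
    (hpos : ∀ i, ∀ j ∈ Astar i, 0 < ∑ a, βt a * x i j a)
    (hneg : ∀ i, ∀ j ∈ S i \ Astar i, (∑ a, βt a * x i j a) < 0)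
    (hlt : ∀ β : Fin p → ℝ, ell S D x β < 0) :
    Tendsto (fun t : ℝ => ell S D x (t • βt)) atTop (nhds 0) ∧
      (⨆ β : Fin p → ℝ, ell S D x β) = 0 ∧
      ∀ β : Fin p → ℝ, ell S D x β < ⨆ β' : Fin p → ℝ, ell S D x β' := by
  have hmem : ∀ i, Astar i ∈ (S i).powersetCard (D i) :=
    fun i => mem_powersetCard.2 ⟨hsub i, hcard i⟩
  have hD : ∀ i, D i ≤ (S i).card := fun i => hcard i ▸ card_le_card (hsub i)
  have hlin : ∀ i j (t : ℝ), ∑ a, x i j a * (t • βt) a = t * ∑ a, βt a * x i j a :=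
    fun i j t => by
      simp only [Pi.smul_apply, smul_eq_mul, mul_sum]
      exact sum_congr rfl fun a _ => by ring
  have hT : Tendsto (fun t : ℝ => ell S D x (t • βt)) atTop (𝓝 0) := by
    simp only [ell_eq_sum_log_poissonBinomialProb S D x hD, hlin]
    simpa using tendsto_finsetSum univ fun i _ => (continuousAt_log one_ne_zero).tendsto.comp <|
      tendsto_poissonBinomialProb (hmem i)
        (fun j hj => tendsto_sigmoid_mul_atTop_of_pos (hpos i j hj))
        fun j hj => tendsto_sigmoid_mul_atTop_of_neg (hneg i j hj)
  have hsup := ciSup_eq_of_forall_le_of_tendsto (fun β => (hlt β).le) hT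
  exact ⟨hT, hsup, fun β => hsup ▸ hlt β⟩
end

section
/- For β̃ as in the separation condition (β̃·x_{ij} > 0 on A_i* and < 0 on its complement, |A_i*| = D_i), along the ray β = t β̃, for each precinct i: log(∑_{A∈F_{D_i}} exp(t ∑_{j∈A} β̃·x_{ij})) − ∑_{j∈S_i} log(1+exp(t β̃·x_{ij})) → 0 as t → ∞. -/
/-!
Write `c j = β̃·x_{ij}`. Factoring `exp (t ∑_{A*} c)` out of the sum over `D`-subsets leaves
`∑_A exp (t (∑_A c - ∑_{A*} c))`, which tends to `1` because `A*` is the unique maximiser of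
`A ↦ ∑_A c` among `D`-subsets. The same factor, split off the `j ∈ A*` terms of
`∑_j log (1 + exp (t c j))`, leaves terms `log (1 + exp (-t c j))` and `log (1 + exp (t c j))`
with exponent tending to `-∞`, all of which tend to `0`.
-/

open Finset Filter Topology

namespace Finset

theorem sum_lt_sum_of_card_le_of_ne {ι : Type*} [DecidableEq ι] {A B : Finset ι} {c : ι → ℝ}
    (hcard : #A ≤ #B) (hne : A ≠ B) (hpos : ∀ j ∈ B \ A, 0 < c j)
    (hnonpos : ∀ j ∈ A \ B, c j ≤ 0) : ∑ j ∈ A, c j < ∑ j ∈ B, c j := by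
  have hBA : (B \ A).Nonempty := by
    rw [sdiff_nonempty]
    exact fun hBA => hne (eq_of_subset_of_card_le hBA hcard).symm
  have hgain : 0 < ∑ j ∈ B \ A, c j := sum_pos hpos hBA
  have hloss : ∑ j ∈ A \ B, c j ≤ 0 := sum_nonpos hnonpos
  have := sum_sdiff_sub_sum_sdiff (s₁ := A) (s₂ := B) (f := c)
  linarith

end Finset

namespace Real

theorem tendsto_log_one_add_exp_mul_atTop_of_neg {c : ℝ} (hc : c < 0) :
    Tendsto (fun t : ℝ => log (1 + exp (t * c))) atTop (𝓝 0) := by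
  have hexp : Tendsto (fun t : ℝ => 1 + exp (t * c)) atTop (𝓝 1) := by
    simpa using (tendsto_exp_atBot.comp (tendsto_id.atTop_mul_const_of_neg hc)).const_add 1
  simpa using hexp.log one_ne_zero

theorem log_one_add_exp_sub_self (z : ℝ) : log (1 + exp z) - z = log (1 + exp (-z)) := by
  have hfactor : 1 + exp z = exp z * (1 + exp (-z)) := by
    rw [mul_add, mul_one, ← exp_add, add_neg_cancel, exp_zero, add_comm]
  rw [hfactor, log_mul (exp_ne_zero _) (by positivity), log_exp]
  ring

theorem tendsto_log_one_add_exp_mul_sub_atTop_of_pos {c : ℝ} (hc : 0 < c) :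
    Tendsto (fun t : ℝ => log (1 + exp (t * c)) - t * c) atTop (𝓝 0) := by
  simpa [log_one_add_exp_sub_self, mul_neg] using
    tendsto_log_one_add_exp_mul_atTop_of_neg (neg_neg_of_pos hc)

/-- Laplace's principle for a finite sum. -/
theorem tendsto_log_sum_exp_mul_sub_of_strict_max {ι : Type*} [DecidableEq ι] {s : Finset ι}
    {f : ι → ℝ} {i₀ : ι} (hi₀ : i₀ ∈ s) (hmax : ∀ i ∈ s, i ≠ i₀ → f i < f i₀) :
    Tendsto (fun t : ℝ => log (∑ i ∈ s, exp (t * f i)) - t * f i₀) atTop (𝓝 0) := by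
  have hrest : Tendsto (fun t : ℝ => ∑ i ∈ s.erase i₀, exp (t * (f i - f i₀))) atTop (𝓝 0) := by
    simpa using tendsto_finsetSum (s.erase i₀) fun i hi =>
      tendsto_exp_atBot.comp <| tendsto_id.atTop_mul_const_of_neg <|
        sub_neg.2 <| hmax i (mem_of_mem_erase hi) (ne_of_mem_erase hi)
  have hsum : Tendsto (fun t : ℝ => ∑ i ∈ s, exp (t * (f i - f i₀))) atTop (𝓝 1) := by
    simpa only [← add_sum_erase s _ hi₀, sub_self, mul_zero, exp_zero, add_zero] using
      hrest.const_add 1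
  refine (log_one ▸ hsum.log one_ne_zero).congr fun t => ?_
  have hfactor : ∑ i ∈ s, exp (t * f i) = exp (t * f i₀) * ∑ i ∈ s, exp (t * (f i - f i₀)) := by
    rw [mul_sum]
    exact sum_congr rfl fun i _ => by rw [← exp_add]; ring_nf
  rw [hfactor,
    log_mul (exp_ne_zero _) (sum_pos (fun i _ => exp_pos _) ⟨i₀, hi₀⟩).ne', log_exp]
  ring

end Real

theorem precinct_loglik_tendsto_zero_under_separation {J : Type*} [DecidableEq J] {p : ℕ}
    (S : Finset J) (x : J → Fin p → ℝ)
    (Astar : Finset J) (hsub : Astar ⊆ S) (D : ℕ) (hD : D = Astar.card)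
    (βt : Fin p → ℝ)
    (hpos : ∀ j ∈ Astar, 0 < ∑ a, βt a * x j a)
    (hneg : ∀ j ∈ S \ Astar, (∑ a, βt a * x j a) < 0) :
    Tendsto (fun t : ℝ =>
        Real.log (∑ A ∈ S.powersetCard D, Real.exp (t * ∑ j ∈ A, ∑ a, βt a * x j a))
          - ∑ j ∈ S, Real.log (1 + Real.exp (t * ∑ a, βt a * x j a)))
      atTop (nhds 0) := by
  set c : J → ℝ := fun j => ∑ a, βt a * x j a
  have hmax : ∀ A ∈ S.powersetCard D, A ≠ Astar → ∑ j ∈ A, c j < ∑ j ∈ Astar, c j := by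
    intro A hA hne
    obtain ⟨hAS, hAcard⟩ := mem_powersetCard.1 hA
    exact sum_lt_sum_of_card_le_of_ne (by omega) hne (fun j hj => hpos j (mem_sdiff.1 hj).1)
      fun j hj => (hneg j (mem_sdiff.2 ⟨hAS (mem_sdiff.1 hj).1, (mem_sdiff.1 hj).2⟩)).le
  have hlaplace := Real.tendsto_log_sum_exp_mul_sub_of_strict_max
    (mem_powersetCard.2 ⟨hsub, hD.symm⟩) hmax
  have hinside := tendsto_finsetSum Astar fun j hj =>
    Real.tendsto_log_one_add_exp_mul_sub_atTop_of_pos (hpos j hj)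
  have houtside := tendsto_finsetSum (S \ Astar) fun j hj =>
    Real.tendsto_log_one_add_exp_mul_atTop_of_neg (hneg j hj)
  simp only [sum_const_zero] at hinside houtside
  refine (((hlaplace.sub hinside).sub houtside).congr fun t => ?_).trans (by simp)
  rw [← sum_sdiff hsub, sum_sub_distrib, mul_sum]
  ring
end

section
/- Under the same Poisson binomial logistic model, the Hessian with respect to β of log P(∑_{j∈S} Y_j = D) equals Cov(∑_{j∈S} x_j Y_j | ∑_{j∈S} Y_j = D) − Cov(∑_{j∈S} x_j Y_j), where Cov denotes the covariance matrix of the ℝ^p-valued random vector ∑_j x_j Y_j. -/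
open Finset
open scoped RealInnerProductSpace

noncomputable def logistic (z : ℝ) : ℝ := (1 + Real.exp (-z))⁻¹

noncomputable def pbWeight {J : Type*} [DecidableEq J] (S A : Finset J) (pr : J → ℝ) : ℝ :=
  (∏ j ∈ A, pr j) * ∏ j ∈ S \ A, (1 - pr j)

noncomputable def pbPmf {J : Type*} [DecidableEq J] (S : Finset J) (D : ℕ) (pr : J → ℝ) : ℝ :=
  ∑ A ∈ S.powersetCard D, pbWeight S A pr

/-- The bilinear form `uᵀ Cov(∑_j x_j Y_j) v` for independent Bernoulli(pr j), `j ∈ S`. -/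
noncomputable def pbCovForm {J : Type*} [DecidableEq J] {p : ℕ}
    (S : Finset J) (pr : J → ℝ) (x : J → EuclideanSpace ℝ (Fin p))
    (u v : EuclideanSpace ℝ (Fin p)) : ℝ :=
  (∑ A ∈ S.powerset, pbWeight S A pr * (⟪∑ j ∈ A, x j, u⟫ * ⟪∑ j ∈ A, x j, v⟫))
    - (∑ A ∈ S.powerset, pbWeight S A pr * ⟪∑ j ∈ A, x j, u⟫) *
      (∑ A ∈ S.powerset, pbWeight S A pr * ⟪∑ j ∈ A, x j, v⟫)

/-- The bilinear form `uᵀ Cov(∑_j x_j Y_j ∣ ∑_j Y_j = D) v`. -/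
noncomputable def pbCondCovForm {J : Type*} [DecidableEq J] {p : ℕ}
    (S : Finset J) (D : ℕ) (pr : J → ℝ) (x : J → EuclideanSpace ℝ (Fin p))
    (u v : EuclideanSpace ℝ (Fin p)) : ℝ :=
  (pbPmf S D pr)⁻¹ *
      (∑ A ∈ S.powersetCard D, pbWeight S A pr * (⟪∑ j ∈ A, x j, u⟫ * ⟪∑ j ∈ A, x j, v⟫))
    - ((pbPmf S D pr)⁻¹ * ∑ A ∈ S.powersetCard D, pbWeight S A pr * ⟪∑ j ∈ A, x j, u⟫) *
      ((pbPmf S D pr)⁻¹ * ∑ A ∈ S.powersetCard D, pbWeight S A pr * ⟪∑ j ∈ A, x j, v⟫)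

/-!
Since `logistic z = eᶻ / (1 + eᶻ)` and `1 - logistic z = 1 / (1 + eᶻ)`, the Poisson-binomial weight of
`A ⊆ S` is `exp ⟪s A, β⟫ / ∑_{B ⊆ S} exp ⟪s B, β⟫` with `s A = ∑_{j ∈ A} x j`: an exponential family
with sufficient statistic `s`. Hence `log P(∑ Y = D)` is the log-partition function over the subsets of
size `D` minus the one over all subsets, and the Hessian of `β ↦ log ∑ᵢ exp ⟪sᵢ, β⟫` is the covariance
of `s` under the Gibbs weights: the conditional covariance for the first, the unconditional for the second.
-/

theorem gradient_fun_sub {F : Type*} [NormedAddCommGroup F] [InnerProductSpace ℝ F]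
    [CompleteSpace F] {f g : F → ℝ} {x : F} (hf : DifferentiableAt ℝ f x)
    (hg : DifferentiableAt ℝ g x) : gradient (fun y => f y - g y) x = gradient f x - gradient g x := by
  simp only [gradient, fderiv_fun_sub hf hg, map_sub]

section LogPartition

variable {ι E : Type*} [NormedAddCommGroup E] [InnerProductSpace ℝ E]

noncomputable def partitionFn (I : Finset ι) (s : ι → E) (b : E) : ℝ :=
  ∑ i ∈ I, Real.exp ⟪s i, b⟫

noncomputable def weightedCov (I : Finset ι) (w f g : ι → ℝ) : ℝ :=
  (∑ i ∈ I, w i)⁻¹ * ∑ i ∈ I, w i * (f i * g i)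
    - ((∑ i ∈ I, w i)⁻¹ * ∑ i ∈ I, w i * f i) * ((∑ i ∈ I, w i)⁻¹ * ∑ i ∈ I, w i * g i)

theorem weightedCov_const_mul (I : Finset ι) {c : ℝ} (hc : c ≠ 0) (w f g : ι → ℝ) :
    weightedCov I (fun i => c * w i) f g = weightedCov I w f g := by
  simp only [weightedCov, mul_assoc, ← Finset.mul_sum, mul_inv]
  field_simp

theorem weightedCov_congr {I : Finset ι} {w w' : ι → ℝ} (h : ∀ i ∈ I, w i = w' i)
    (f g : ι → ℝ) : weightedCov I w f g = weightedCov I w' f g := by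
  have hmul (F : ι → ℝ) : ∑ i ∈ I, w i * F i = ∑ i ∈ I, w' i * F i :=
    Finset.sum_congr rfl fun i hi => by rw [h i hi]
  simp only [weightedCov, hmul, Finset.sum_congr rfl h]

variable (I : Finset ι) (s : ι → E)

theorem partitionFn_pos (hI : I.Nonempty) (b : E) : 0 < partitionFn I s b :=
  Finset.sum_pos (fun _ _ => Real.exp_pos _) hI

theorem hasFDerivAt_partitionFn (b : E) :
    HasFDerivAt (partitionFn I s) (∑ i ∈ I, Real.exp ⟪s i, b⟫ • innerSL ℝ (s i)) b :=
  HasFDerivAt.fun_sum fun _ _ => ((innerSL ℝ _).hasFDerivAt).exp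

variable [CompleteSpace E]

theorem hasGradientAt_log_partitionFn (hI : I.Nonempty) (b : E) :
    HasGradientAt (fun b => Real.log (partitionFn I s b))
      ((partitionFn I s b)⁻¹ • ∑ i ∈ I, Real.exp ⟪s i, b⟫ • s i) b := by
  rw [hasGradientAt_iff_hasFDerivAt]
  refine ((hasFDerivAt_partitionFn I s b).log (partitionFn_pos I s hI b).ne').congr_fderiv ?_
  ext h
  simp only [smul_apply, _root_.sum_apply, coe_innerSL_apply, smul_eq_mul, map_smul, map_sum,
    InnerProductSpace.toDual_apply_apply]

theorem gradient_log_partitionFn (hI : I.Nonempty) :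
    gradient (fun b => Real.log (partitionFn I s b))
      = fun b => (partitionFn I s b)⁻¹ • ∑ i ∈ I, Real.exp ⟪s i, b⟫ • s i :=
  funext fun b => (hasGradientAt_log_partitionFn I s hI b).gradient

theorem hasFDerivAt_gradient_log_partitionFn (hI : I.Nonempty) (β : E) :
    HasFDerivAt (gradient fun b => Real.log (partitionFn I s b))
      ((partitionFn I s β)⁻¹ • ∑ i ∈ I, (Real.exp ⟪s i, β⟫ • innerSL ℝ (s i)).smulRight (s i)
        + (-((partitionFn I s β) ^ 2)⁻¹ • ∑ i ∈ I, Real.exp ⟪s i, β⟫ • innerSL ℝ (s i)).smulRight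
          (∑ i ∈ I, Real.exp ⟪s i, β⟫ • s i)) β := by
  rw [gradient_log_partitionFn I s hI]
  exact ((hasDerivAt_inv (partitionFn_pos I s hI β).ne').comp_hasFDerivAt β
    (hasFDerivAt_partitionFn I s β)).smul
    (HasFDerivAt.fun_sum fun i _ => (((innerSL ℝ (s i)).hasFDerivAt).exp).smul_const (s i))

theorem inner_fderiv_gradient_log_partitionFn (hI : I.Nonempty) (β u v : E) :
    ⟪fderiv ℝ (gradient fun b => Real.log (partitionFn I s b)) β u, v⟫
      = weightedCov I (fun i => Real.exp ⟪s i, β⟫) (fun i => ⟪s i, u⟫) (fun i => ⟪s i, v⟫) := by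
  rw [(hasFDerivAt_gradient_log_partitionFn I s hI β).fderiv]
  have hZ := (partitionFn_pos I s hI β).ne'
  simp only [neg_smul, add_apply, smul_apply, _root_.sum_apply, ContinuousLinearMap.smulRight_apply,
    coe_innerSL_apply, smul_eq_mul, neg_apply, inner_add_left, real_inner_smul_left, sum_inner,
    inner_neg_left, weightedCov]
  unfold partitionFn at hZ ⊢
  field_simp
  ring

end LogPartition

theorem logistic_eq (z : ℝ) : logistic z = Real.exp z * (1 + Real.exp z)⁻¹ := by
  rw [logistic, Real.exp_neg]
  field_simp
  ring

theorem one_sub_logistic (z : ℝ) : 1 - logistic z = (1 + Real.exp z)⁻¹ := by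
  have : 1 + Real.exp z ≠ 0 := by positivity
  rw [logistic_eq]
  field_simp
  ring

section PoissonBinomial

variable {J : Type*} [DecidableEq J] {p : ℕ}

theorem sum_powerset_pbWeight (S : Finset J) (pr : J → ℝ) :
    ∑ A ∈ S.powerset, pbWeight S A pr = 1 := by
  simpa [pbWeight] using (Finset.prod_add pr (fun j => 1 - pr j) S).symm

theorem sum_powerset_exp_sum (S : Finset J) (t : J → ℝ) :
    ∑ A ∈ S.powerset, Real.exp (∑ j ∈ A, t j) = ∏ j ∈ S, (1 + Real.exp (t j)) := by
  simp_rw [add_comm (1 : ℝ), Finset.prod_add, Finset.prod_const_one, mul_one, Real.exp_sum]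

theorem pbCondCovForm_eq_weightedCov (S : Finset J) (D : ℕ)
    (pr : J → ℝ) (x : J → EuclideanSpace ℝ (Fin p)) (u v : EuclideanSpace ℝ (Fin p)) :
    pbCondCovForm S D pr x u v
      = weightedCov (S.powersetCard D) (fun A => pbWeight S A pr)
          (fun A => ⟪∑ j ∈ A, x j, u⟫) (fun A => ⟪∑ j ∈ A, x j, v⟫) :=
  rfl

theorem pbCovForm_eq_weightedCov (S : Finset J) (pr : J → ℝ)
    (x : J → EuclideanSpace ℝ (Fin p)) (u v : EuclideanSpace ℝ (Fin p)) :
    pbCovForm S pr x u v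
      = weightedCov S.powerset (fun A => pbWeight S A pr)
          (fun A => ⟪∑ j ∈ A, x j, u⟫) (fun A => ⟪∑ j ∈ A, x j, v⟫) := by
  simp only [weightedCov, sum_powerset_pbWeight, inv_one, one_mul, pbCovForm]

variable {S : Finset J}

theorem pbWeight_logistic {A : Finset J} (hA : A ⊆ S) (t : J → ℝ) :
    pbWeight S A (fun j => logistic (t j))
      = (∏ j ∈ S, (1 + Real.exp (t j)))⁻¹ * Real.exp (∑ j ∈ A, t j) := by
  rw [pbWeight, Real.exp_sum, ← Finset.prod_inv_distrib, ← Finset.prod_sdiff hA]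
  simp only [one_sub_logistic]
  simp only [logistic_eq, Finset.prod_mul_distrib]
  ring

variable (x : J → EuclideanSpace ℝ (Fin p)) (b : EuclideanSpace ℝ (Fin p))

theorem pbWeight_logistic_inner {A : Finset J} (hA : A ⊆ S) :
    pbWeight S A (fun j => logistic ⟪x j, b⟫)
      = (partitionFn S.powerset (fun B => ∑ j ∈ B, x j) b)⁻¹ * Real.exp ⟪∑ j ∈ A, x j, b⟫ := by
  simp only [pbWeight_logistic hA, partitionFn, sum_inner, sum_powerset_exp_sum]

theorem pbPmf_logistic_inner (D : ℕ) :
    pbPmf S D (fun j => logistic ⟪x j, b⟫)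
      = (partitionFn S.powerset (fun B => ∑ j ∈ B, x j) b)⁻¹
        * partitionFn (S.powersetCard D) (fun B => ∑ j ∈ B, x j) b := by
  rw [pbPmf, partitionFn.eq_1 (S.powersetCard D), Finset.mul_sum]
  exact Finset.sum_congr rfl fun A hA =>
    pbWeight_logistic_inner x b (Finset.mem_powersetCard.1 hA).1

theorem log_pbPmf_logistic_inner {D : ℕ} (hD : D ≤ S.card) :
    Real.log (pbPmf S D (fun j => logistic ⟪x j, b⟫))
      = Real.log (partitionFn (S.powersetCard D) (fun B => ∑ j ∈ B, x j) b)
        - Real.log (partitionFn S.powerset (fun B => ∑ j ∈ B, x j) b) := by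
  rw [pbPmf_logistic_inner, Real.log_mul, Real.log_inv, neg_add_eq_sub]
  · exact inv_ne_zero (partitionFn_pos _ _ (Finset.powerset_nonempty S) b).ne'
  · exact (partitionFn_pos _ _ (Finset.powersetCard_nonempty.2 hD) b).ne'

theorem weightedCov_pbWeight_logistic_inner {I : Finset (Finset J)} (hI : ∀ A ∈ I, A ⊆ S)
    (f g : Finset J → ℝ) :
    weightedCov I (fun A => pbWeight S A (fun j => logistic ⟪x j, b⟫)) f g
      = weightedCov I (fun A => Real.exp ⟪∑ j ∈ A, x j, b⟫) f g := by
  rw [weightedCov_congr (fun A hA => pbWeight_logistic_inner x b (hI A hA)),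
    weightedCov_const_mul I (inv_ne_zero (partitionFn_pos _ _ (Finset.powerset_nonempty S) b).ne')]

end PoissonBinomial

theorem hessian_pb_loglik {J : Type*} [DecidableEq J] {p : ℕ}
    (S : Finset J) (D : ℕ) (hD : D ≤ S.card)
    (x : J → EuclideanSpace ℝ (Fin p)) (β : EuclideanSpace ℝ (Fin p))
    (u v : EuclideanSpace ℝ (Fin p)) :
    ⟪(fderiv ℝ (fun b : EuclideanSpace ℝ (Fin p) =>
          gradient (fun b' : EuclideanSpace ℝ (Fin p) =>
            Real.log (pbPmf S D (fun j => logistic ⟪x j, b'⟫))) b) β) u, v⟫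
      = pbCondCovForm S D (fun j => logistic ⟪x j, β⟫) x u v
          - pbCovForm S (fun j => logistic ⟪x j, β⟫) x u v := by
  set s : Finset J → EuclideanSpace ℝ (Fin p) := fun A => ∑ j ∈ A, x j
  have hD' : (S.powersetCard D).Nonempty := Finset.powersetCard_nonempty.2 hD
  have hS : S.powerset.Nonempty := Finset.powerset_nonempty S
  have hgrad : (fun b => gradient (fun b' => Real.log (pbPmf S D (fun j => logistic ⟪x j, b'⟫))) b)
      = gradient (fun b => Real.log (partitionFn (S.powersetCard D) s b))
        - gradient (fun b => Real.log (partitionFn S.powerset s b)) := by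
    simp_rw [log_pbPmf_logistic_inner x _ hD]
    exact funext fun b => gradient_fun_sub
      (hasGradientAt_log_partitionFn _ s hD' b).differentiableAt
      (hasGradientAt_log_partitionFn _ s hS b).differentiableAt
  rw [hgrad, fderiv_sub (hasFDerivAt_gradient_log_partitionFn _ s hD' β).differentiableAt
      (hasFDerivAt_gradient_log_partitionFn _ s hS β).differentiableAt,
    sub_apply, inner_sub_left,
    inner_fderiv_gradient_log_partitionFn _ s hD', inner_fderiv_gradient_log_partitionFn _ s hS,
    pbCondCovForm_eq_weightedCov, pbCovForm_eq_weightedCov,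
    weightedCov_pbWeight_logistic_inner x β fun A hA => (Finset.mem_powersetCard.1 hA).1,
    weightedCov_pbWeight_logistic_inner x β fun A hA => Finset.mem_powerset.1 hA]
end
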